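/- Let Λ(t,x) = ⟨tx⟩^{-1} log(1 + |x|^{-1}) for t ≥ 1, x > 0. Then t^{1/2} ‖Λ(t,·)‖_{L²(0,∞)} ≤ C log⟨t⟩ for all t ≥ 1, i.e. t^{1/2}(∫₀^∞ ⟨tx⟩^{-2} log²(1+1/x) dx)^{1/2} ≤ C log⟨t⟩. -/

import Mathlib

/-!
Substituting `u = t x` turns `t ∫₀^∞ ⟨tx⟩⁻² log²(1 + 1/x) dx` into
`∫₀^∞ ⟨u⟩⁻² log²(1 + t/u) du`. Since `1 + t/u ≤ (1 + t)(1 + 1/u)`, the square of the logarithm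
is at most `2 log²(1 + t) + 2 log²(1 + 1/u)`, so the integral is at most `π log²(1 + t) + 2K`
with `K = ∫₀^∞ ⟨u⟩⁻² log²(1 + 1/u) du`, which is finite because `log(1 + 1/u) ≤ 4 u^{-1/4}`.
Finally `log(1 + t) ≤ 2 log⟨t⟩` and `log⟨t⟩ ≥ log⟨1⟩ > 0` for `t ≥ 1`.
-/

open MeasureTheory

/-- The Japanese bracket `⟨y⟩ = (1 + y²)^{1/2}`. -/
noncomputable def jap (y : ℝ) : ℝ := Real.sqrt (1 + y ^ 2)

open Real Set

lemma jap_rpow_neg_two (y : ℝ) : jap y ^ (-(2 : ℝ)) = (1 + y ^ 2)⁻¹ := by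
  rw [jap, rpow_neg (sqrt_nonneg _), rpow_two, sq_sqrt (by positivity)]

lemma log_jap (y : ℝ) : log (jap y) = log (1 + y ^ 2) / 2 :=
  log_sqrt (by positivity)

lemma log_one_add_le_two_mul_log_jap {t : ℝ} (ht : 1 ≤ t) :
    log (1 + t) ≤ 2 * log (jap t) := by
  rw [log_jap]
  have : log (1 + t) ≤ log (1 + t ^ 2) := log_le_log (by linarith) (by nlinarith)
  linarith

lemma log_two_div_two_le_log_jap {t : ℝ} (ht : 1 ≤ t) : log 2 / 2 ≤ log (jap t) := by
  rw [log_jap]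
  gcongr
  nlinarith

lemma log_one_add_mul_le {a b : ℝ} (ha : 0 ≤ a) (hb : 0 ≤ b) :
    log (1 + a * b) ≤ log (1 + a) + log (1 + b) := by
  rw [← log_mul (by positivity) (by positivity)]
  exact log_le_log (by positivity) (by nlinarith)

lemma log_one_add_le_rpow_div {y ε : ℝ} (hy : 0 ≤ y) (hε₀ : 0 < ε) (hε₁ : ε ≤ 1) :
    log (1 + y) ≤ y ^ ε / ε := by
  have hsub : (1 + y) ^ ε ≤ 1 + y ^ ε := by
    simpa using rpow_add_le_add_rpow zero_le_one hy hε₀.le hε₁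
  have hlog : ε * log (1 + y) ≤ y ^ ε := calc
    ε * log (1 + y) = log ((1 + y) ^ ε) := (log_rpow (by positivity) ε).symm
    _ ≤ log (1 + y ^ ε) := log_le_log (by positivity) hsub
    _ ≤ y ^ ε := by linarith [log_le_sub_one_of_pos (by positivity : 0 < 1 + y ^ ε)]
  rwa [le_div_iff₀ hε₀, mul_comm]

lemma integrableOn_rpow_mul_inv_one_add_sq {a : ℝ} (ha₀ : -1 < a) (ha₁ : a < 1) :
    IntegrableOn (fun u : ℝ ↦ u ^ a * (1 + u ^ 2)⁻¹) (Ioi 0) := by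
  rw [← Ioc_union_Ioi_eq_Ioi zero_le_one]
  refine IntegrableOn.union ?_ ?_
  · have hpow : IntegrableOn (fun u : ℝ ↦ u ^ a) (Ioc 0 1) :=
      (intervalIntegrable_iff_integrableOn_Ioc_of_le zero_le_one).mp
        (intervalIntegral.intervalIntegrable_rpow' ha₀)
    refine hpow.mono' (by fun_prop) ?_
    filter_upwards [ae_restrict_mem measurableSet_Ioc] with u hu
    have hpos : 0 ≤ u ^ a := rpow_nonneg hu.1.le a
    rw [norm_of_nonneg (by positivity)]
    exact mul_le_of_le_one_right hpos (inv_le_one_of_one_le₀ (by nlinarith))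
  · have hpow : IntegrableOn (fun u : ℝ ↦ u ^ (a - 2)) (Ioi 1) :=
      integrableOn_Ioi_rpow_of_lt (by linarith) zero_lt_one
    refine hpow.mono' (by fun_prop) ?_
    filter_upwards [ae_restrict_mem measurableSet_Ioi] with u (hu : 1 < u)
    have hu₀ : 0 < u := zero_lt_one.trans hu
    rw [norm_of_nonneg (by positivity), rpow_sub hu₀, rpow_two, div_eq_mul_inv]
    gcongr
    linarith

lemma integrableOn_inv_one_add_sq_mul_log_sq :
    IntegrableOn (fun u : ℝ ↦ (1 + u ^ 2)⁻¹ * log (1 + 1 / u) ^ 2) (Ioi 0) := by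
  have hmaj := (integrableOn_rpow_mul_inv_one_add_sq (a := -(1 / 2)) (by norm_num)
    (by norm_num)).const_mul 16
  refine hmaj.mono' (by fun_prop) ?_
  filter_upwards [ae_restrict_mem measurableSet_Ioi] with u (hu : 0 < u)
  have hlog : log (1 + 1 / u) ≤ (1 / u) ^ (1 / 4 : ℝ) / (1 / 4) :=
    log_one_add_le_rpow_div (by positivity) (by norm_num) (by norm_num)
  have hsq : log (1 + 1 / u) ^ 2 ≤ 16 * u ^ (-(1 / 2 : ℝ)) := by
    have h0 : 0 ≤ log (1 + 1 / u) := log_nonneg (by simp [hu.le])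
    calc log (1 + 1 / u) ^ 2 ≤ ((1 / u) ^ (1 / 4 : ℝ) / (1 / 4)) ^ 2 := by gcongr
      _ = 16 * u ^ (-(1 / 2 : ℝ)) := by
        rw [div_pow, ← rpow_natCast, ← rpow_mul (by positivity), one_div u, inv_rpow hu.le,
          ← rpow_neg hu.le]
        norm_num [div_eq_mul_inv, mul_comm]
  rw [norm_of_nonneg (by positivity)]
  calc (1 + u ^ 2)⁻¹ * log (1 + 1 / u) ^ 2
      ≤ (1 + u ^ 2)⁻¹ * (16 * u ^ (-(1 / 2 : ℝ))) := by gcongr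
    _ = 16 * (u ^ (-(1 / 2 : ℝ)) * (1 + u ^ 2)⁻¹) := by ring

lemma mul_integral_jap_rpow_mul_log_sq {t : ℝ} (ht : 0 < t) :
    t * ∫ x in Ioi (0 : ℝ), jap (t * x) ^ (-(2 : ℝ)) * log (1 + 1 / x) ^ 2
      = ∫ u in Ioi (0 : ℝ), (1 + u ^ 2)⁻¹ * log (1 + t * (1 / u)) ^ 2 := by
  have hsubst := integral_comp_mul_left_Ioi'
    (fun u : ℝ ↦ (1 + u ^ 2)⁻¹ * log (1 + t * (1 / u)) ^ 2) 0 ht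
  rw [mul_zero, smul_eq_mul] at hsubst
  rw [← hsubst]
  congr 1
  refine integral_congr_ae (Filter.Eventually.of_forall fun x ↦ ?_)
  dsimp only
  rw [jap_rpow_neg_two, one_div (t * x), mul_inv, ← mul_assoc, mul_inv_cancel₀ ht.ne', one_mul,
    one_div]

lemma integral_inv_one_add_sq_mul_log_sq_le {t : ℝ} (ht : 0 ≤ t) :
    ∫ u in Ioi (0 : ℝ), (1 + u ^ 2)⁻¹ * log (1 + t * (1 / u)) ^ 2
      ≤ π * log (1 + t) ^ 2
        + 2 * ∫ u in Ioi (0 : ℝ), (1 + u ^ 2)⁻¹ * log (1 + 1 / u) ^ 2 := by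
  have hweight : IntegrableOn (fun u : ℝ ↦ (1 + u ^ 2)⁻¹) (Ioi 0) :=
    integrable_inv_one_add_sq.integrableOn
  have hweight_integral : ∫ u in Ioi (0 : ℝ), (1 + u ^ 2)⁻¹ = π / 2 := by
    rw [integral_Ioi_inv_one_add_sq, arctan_zero, sub_zero]
  calc ∫ u in Ioi (0 : ℝ), (1 + u ^ 2)⁻¹ * log (1 + t * (1 / u)) ^ 2
      ≤ ∫ u in Ioi (0 : ℝ), (2 * log (1 + t) ^ 2 * (1 + u ^ 2)⁻¹
          + 2 * ((1 + u ^ 2)⁻¹ * log (1 + 1 / u) ^ 2)) := by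
        refine integral_mono_of_nonneg (Filter.Eventually.of_forall fun u ↦ by positivity)
          ((hweight.const_mul _).add (integrableOn_inv_one_add_sq_mul_log_sq.const_mul 2)) ?_
        filter_upwards [ae_restrict_mem measurableSet_Ioi] with u (hu : 0 < u)
        have hsplit := log_one_add_mul_le ht (one_div_pos.mpr hu).le
        have hlhs : 0 ≤ log (1 + t * (1 / u)) := log_nonneg (le_add_of_nonneg_right (by positivity))
        have hsq : log (1 + t * (1 / u)) ^ 2
            ≤ 2 * log (1 + t) ^ 2 + 2 * log (1 + 1 / u) ^ 2 := by
          nlinarith [sq_nonneg (log (1 + t) - log (1 + 1 / u))]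
        have hw : 0 ≤ (1 + u ^ 2)⁻¹ := by positivity
        nlinarith
    _ = π * log (1 + t) ^ 2
        + 2 * ∫ u in Ioi (0 : ℝ), (1 + u ^ 2)⁻¹ * log (1 + 1 / u) ^ 2 := by
        rw [integral_add (hweight.const_mul _)
            (integrableOn_inv_one_add_sq_mul_log_sq.const_mul 2), integral_const_mul,
          integral_const_mul, hweight_integral]
        ring

/-- for `Λ(t,x) = ⟨tx⟩⁻¹ log(1 + |x|⁻¹)`, one has
`t^{1/2} ‖Λ(t,·)‖_{L²(0,∞)} ≤ C log⟨t⟩` for all `t ≥ 1`. -/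
theorem log_weight_L2_bound :
    ∃ C > 0, ∀ t : ℝ, 1 ≤ t →
      t ^ ((1 : ℝ) / 2) *
          Real.sqrt (∫ x in Set.Ioi (0 : ℝ), (jap (t * x)) ^ (-(2 : ℝ)) * (Real.log (1 + 1 / x)) ^ 2)
        ≤ C * Real.log (jap t) := by
  set K := ∫ u in Ioi (0 : ℝ), (1 + u ^ 2)⁻¹ * log (1 + 1 / u) ^ 2
  have hK : 0 ≤ K := setIntegral_nonneg measurableSet_Ioi fun u _ ↦ by positivity
  have hlog2 : 0 < log 2 / 2 := by positivity
  set A := 4 * π + 2 * K / (log 2 / 2) ^ 2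
  refine ⟨√A, by positivity, fun t ht ↦ ?_⟩
  have ht₀ : 0 < t := zero_lt_one.trans_le ht
  have hL := log_two_div_two_le_log_jap ht
  have hlog : log (1 + t) ^ 2 ≤ 4 * log (jap t) ^ 2 := by
    nlinarith [log_one_add_le_two_mul_log_jap ht, log_nonneg (by linarith : (1 : ℝ) ≤ 1 + t)]
  have hconst : 2 * K ≤ 2 * K / (log 2 / 2) ^ 2 * log (jap t) ^ 2 := by
    rw [div_mul_eq_mul_div, le_div_iff₀ (by positivity)]
    gcongr
  have hbound : t * ∫ x in Ioi (0 : ℝ), jap (t * x) ^ (-(2 : ℝ)) * log (1 + 1 / x) ^ 2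
      ≤ A * log (jap t) ^ 2 := by
    rw [mul_integral_jap_rpow_mul_log_sq ht₀]
    refine (integral_inv_one_add_sq_mul_log_sq_le ht₀.le).trans ?_
    nlinarith [pi_pos]
  calc t ^ ((1 : ℝ) / 2) *
        √(∫ x in Ioi (0 : ℝ), jap (t * x) ^ (-(2 : ℝ)) * log (1 + 1 / x) ^ 2)
      = √(t * ∫ x in Ioi (0 : ℝ), jap (t * x) ^ (-(2 : ℝ)) * log (1 + 1 / x) ^ 2) := by
        rw [← sqrt_eq_rpow, sqrt_mul ht₀.le]
    _ ≤ √(A * log (jap t) ^ 2) := sqrt_le_sqrt hbound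
    _ = √A * log (jap t) := by rw [sqrt_mul' _ (by positivity), sqrt_sq (by linarith)]
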